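/- Let k, k♯ : ℝⁿ × ℝⁿ → ℝ be functions such that for all x, y ∈ ℝⁿ the map x ↦ k♯(x, y) is differentiable with ∇ₓ k♯(x, y) = k(x, y)(y − x), and suppose k♯ > 0 everywhere. Let y⁺₁, …, y⁺_M ∈ ℝⁿ and y⁻₁, …, y⁻_N ∈ ℝⁿ be finite families of points, with sharp kernel density estimates p_KDE♯(x) = (1/M) Σₘ k♯(x, y⁺ₘ) and q_KDE♯(x) = (1/N) Σⱼ k♯(x, y⁻ⱼ). Define the sharp-normalized drift field V♯(x) = (Σₘ k(x, y⁺ₘ)(y⁺ₘ − x))/(Σₘ k♯(x, y⁺ₘ)) − (Σⱼ k(x, y⁻ⱼ)(y⁻ⱼ − x))/(Σⱼ k♯(x, y⁻ⱼ)). Then for all x ∈ ℝⁿ, V♯(x) = −∇ₓ log( q_KDE♯(x) / p_KDE♯(x) ); in particular V♯ is conservative with scalar potential the log-KDE potential log(q_KDE♯(x)/p_KDE♯(x)). -/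

import Mathlib

/-!
Because `∇ₓ k♯(x, y) = k(x, y) (y - x)`, the gradient of `log (c * ∑ᵢ k♯(x, yᵢ))` is the
normalized drift `(∑ᵢ k♯(x, yᵢ))⁻¹ • ∑ᵢ k(x, yᵢ) (yᵢ - x)` for every constant `c ≠ 0`, which
cancels in the logarithmic derivative. As the KDEs are positive,
`log (q/p) = log q - log p`, and subtracting the two drifts gives `-V♯`.
-/

section Gradient

variable {F : Type*} [NormedAddCommGroup F] [InnerProductSpace ℝ F] [CompleteSpace F]
  {f g : F → ℝ} {f' g' x : F}

theorem HasGradientAt.sub (hf : HasGradientAt f f' x) (hg : HasGradientAt g g' x) :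
    HasGradientAt (fun x => f x - g x) (f' - g') x := by
  rw [hasGradientAt_iff_hasFDerivAt, map_sub]
  exact hf.hasFDerivAt.sub hg.hasFDerivAt

theorem HasGradientAt.const_mul (c : ℝ) (hf : HasGradientAt f f' x) :
    HasGradientAt (fun x => c * f x) (c • f') x := by
  rw [hasGradientAt_iff_hasFDerivAt, map_smul]
  exact hf.hasFDerivAt.const_mul c

theorem HasGradientAt.fun_sum {ι : Type*} {s : Finset ι} {f : ι → F → ℝ} {f' : ι → F}
    (h : ∀ i ∈ s, HasGradientAt (f i) (f' i) x) :
    HasGradientAt (fun x => ∑ i ∈ s, f i x) (∑ i ∈ s, f' i) x := by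
  rw [hasGradientAt_iff_hasFDerivAt, map_sum]
  exact HasFDerivAt.fun_sum fun i hi => (h i hi).hasFDerivAt

theorem HasGradientAt.log (hf : HasGradientAt f f' x) (hx : f x ≠ 0) :
    HasGradientAt (fun x => Real.log (f x)) ((f x)⁻¹ • f') x := by
  rw [hasGradientAt_iff_hasFDerivAt, map_smul]
  exact hf.hasFDerivAt.log hx

theorem HasGradientAt.log_const_mul_sum {ι : Type*} {s : Finset ι} {f : ι → F → ℝ}
    {f' : ι → F} (h : ∀ i ∈ s, HasGradientAt (f i) (f' i) x) {c : ℝ} (hc : c ≠ 0)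
    (hx : ∑ i ∈ s, f i x ≠ 0) :
    HasGradientAt (fun x => Real.log (c * ∑ i ∈ s, f i x))
      ((∑ i ∈ s, f i x)⁻¹ • ∑ i ∈ s, f' i) x := by
  convert ((HasGradientAt.fun_sum h).const_mul c).log (mul_ne_zero hc hx) using 1
  rw [smul_smul, mul_inv, mul_comm c⁻¹, inv_mul_cancel_right₀ hc]

theorem hasGradientAt_log_const_mul_sum_sharp {ι : Type*} [Fintype ι] [Nonempty ι]
    {k ks : F → F → ℝ}
    (hks : ∀ y, HasGradientAt (fun x' => ks x' y) (k x y • (y - x)) x)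
    (hpos : ∀ y, 0 < ks x y) {c : ℝ} (hc : c ≠ 0) (y : ι → F) :
    HasGradientAt (fun x' => Real.log (c * ∑ i, ks x' (y i)))
      ((∑ i, ks x (y i))⁻¹ • ∑ i, k x (y i) • (y i - x)) x :=
  HasGradientAt.log_const_mul_sum (fun i _ => hks (y i)) hc
    (Finset.sum_pos (fun i _ => hpos (y i)) Finset.univ_nonempty).ne'

end Gradient

/-- If `∇ₓ k♯(x,y) = k(x,y)(y − x)` and `k♯ > 0`, then the
sharp-normalized drift field `V♯ = V♯⁺ − V♯⁻` satisfies
`V♯(x) = −∇ₓ log(q_KDE♯(x)/p_KDE♯(x))`; in particular `V♯` is conservative with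
the log-KDE potential as scalar potential. -/
theorem sharp_normalized_drift_eq_neg_grad_log_KDE {n M N : ℕ}
    (hM : 0 < M) (hN : 0 < N)
    (k ks : EuclideanSpace ℝ (Fin n) → EuclideanSpace ℝ (Fin n) → ℝ)
    (hks : ∀ x y : EuclideanSpace ℝ (Fin n),
      HasGradientAt (fun x' => ks x' y) (k x y • (y - x)) x)
    (hpos : ∀ x y : EuclideanSpace ℝ (Fin n), 0 < ks x y)
    (yp : Fin M → EuclideanSpace ℝ (Fin n)) (yn : Fin N → EuclideanSpace ℝ (Fin n))
    (pKDEs qKDEs : EuclideanSpace ℝ (Fin n) → ℝ)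
    (hp : ∀ x, pKDEs x = (1 / (M : ℝ)) * ∑ m, ks x (yp m))
    (hq : ∀ x, qKDEs x = (1 / (N : ℝ)) * ∑ j, ks x (yn j))
    (Vs : EuclideanSpace ℝ (Fin n) → EuclideanSpace ℝ (Fin n))
    (hVs : ∀ x, Vs x = (∑ m, ks x (yp m))⁻¹ • ∑ m, k x (yp m) • (yp m - x)
                     - (∑ j, ks x (yn j))⁻¹ • ∑ j, k x (yn j) • (yn j - x)) :
    (∀ x, Vs x = -gradient (fun x' => Real.log (qKDEs x' / pKDEs x')) x) ∧
    ∃ L : EuclideanSpace ℝ (Fin n) → ℝ,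
      (∀ x, L x = Real.log (qKDEs x / pKDEs x)) ∧ ∀ x, Vs x = -gradient L x := by
  have : Nonempty (Fin M) := Fin.pos_iff_nonempty.mp hM
  have : Nonempty (Fin N) := Fin.pos_iff_nonempty.mp hN
  have hp_pos : ∀ x, 0 < pKDEs x := fun x => by
    rw [hp]
    exact mul_pos (by positivity) (Finset.sum_pos (fun m _ => hpos x (yp m)) Finset.univ_nonempty)
  have hq_pos : ∀ x, 0 < qKDEs x := fun x => by
    rw [hq]
    exact mul_pos (by positivity) (Finset.sum_pos (fun j _ => hpos x (yn j)) Finset.univ_nonempty)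
  have hlog_div : (fun x => Real.log (qKDEs x / pKDEs x))
      = fun x => Real.log (qKDEs x) - Real.log (pKDEs x) :=
    funext fun x => Real.log_div (hq_pos x).ne' (hp_pos x).ne'
  have hdrift : ∀ x, Vs x = -gradient (fun x' => Real.log (qKDEs x' / pKDEs x')) x := by
    intro x
    have hq_grad := hasGradientAt_log_const_mul_sum_sharp (hks x) (hpos x)
      (one_div_ne_zero (Nat.cast_ne_zero.mpr hN.ne')) yn
    have hp_grad := hasGradientAt_log_const_mul_sum_sharp (hks x) (hpos x)
      (one_div_ne_zero (Nat.cast_ne_zero.mpr hM.ne')) yp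
    rw [hlog_div]
    simp only [hp, hq]
    rw [(hq_grad.sub hp_grad).gradient, hVs, neg_sub]
  exact ⟨hdrift, _, fun _ => rfl, hdrift⟩
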